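/- arXiv:2407.17680 — 3 statements merged into one kernel-verified Lean document; each statement's English description precedes it below -/
import Mathlib

section
/- The number of pairs (a,b) ∈ ℤ² with |a| ≤ X and |b| ≤ X² such that either b(a²−4b) = 0, or the 2-torsion subgroup {P ∈ E_{a,b}(ℚ) : 2·P = O} of the elliptic curve E_{a,b}: y² = x³ + ax² + bx does not have exactly 2 elements, is O(X²). In particular, for 100% of pairs (a,b) ordered this way, E_{a,b}(ℚ)[2] is cyclic of order 2. -/
/-!
A rational point of order 2 on `y² = x³ + ax² + bx` has `y = 0`, so its `x` is a root of
`x (x² + ax + b)`; a root `x ≠ 0` gives `(2x + a)² = a² − 4b`. Hence for every exceptional pair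
(including `b = 0` and `a² = 4b`) the discriminant `a² − 4b = c²` is a perfect square. Such a pair
is recovered from `(a, |c|)`, and `c² ≤ a² + 4|b| ≤ 5X²` leaves `O(X²)` choices.
-/

/-- The elliptic curve `y² = x³ + ax² + bx` over `ℚ`. -/
noncomputable def Eab (a b : ℤ) : WeierstrassCurve.Affine ℚ :=
  { a₁ := 0, a₂ := (a : ℚ), a₃ := 0, a₄ := (b : ℚ), a₆ := 0 }

open WeierstrassCurve.Affine

namespace WeierstrassCurve.Affine.Point

variable {F : Type*} [Field F] [DecidableEq F] {W : WeierstrassCurve.Affine F}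

lemma two_nsmul_some_eq_zero_iff {x y : F} (h : W.Nonsingular x y) :
    2 • some x y h = 0 ↔ y = W.negY x y := by
  rw [two_nsmul]
  refine ⟨fun h2 => ?_, add_self_of_Y_eq⟩
  by_contra hy
  exact some_ne_zero _ ((add_self_of_Y_ne hy).symm.trans h2)

end WeierstrassCurve.Affine.Point

namespace Eab

lemma negY_eq (a b : ℤ) (x y : ℚ) : (Eab a b).negY x y = -y := by
  simp [negY, Eab]

lemma equation_zero_iff (a b : ℤ) (x : ℚ) :
    (Eab a b).Equation x 0 ↔ x * (x ^ 2 + a * x + b) = 0 := by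
  rw [equation_iff]
  simp only [Eab]
  constructor <;> intro h <;> linear_combination -h

lemma nonsingular_zero_zero {a b : ℤ} (hb : b ≠ 0) : (Eab a b).Nonsingular 0 0 := by
  simp [nonsingular_zero, Eab, hb]

lemma isSquare_of_root_ne_zero {a b : ℤ} {x : ℚ} (hx : x ≠ 0)
    (h : x * (x ^ 2 + a * x + b) = 0) : IsSquare (a ^ 2 - 4 * b) := by
  have hquad : x ^ 2 + a * x + b = 0 := (mul_eq_zero.mp h).resolve_left hx
  rw [← Rat.isSquare_intCast_iff]
  exact ⟨2 * x + a, by push_cast; linear_combination -4 * hquad⟩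

lemma twoTorsion_eq_pair {a b : ℤ} (hb : b ≠ 0) (hsq : ¬ IsSquare (a ^ 2 - 4 * b)) :
    {P : (Eab a b).Point | 2 • P = 0} = {0, .some 0 0 (nonsingular_zero_zero hb)} := by
  ext (_ | @⟨x, y, h⟩)
  · exact iff_of_true (nsmul_zero 2) (Set.mem_insert _ _)
  · simp only [Set.mem_ofPred_eq, Point.two_nsmul_some_eq_zero_iff, negY_eq, Set.mem_insert_iff,
      Set.mem_singleton_iff, Point.some_ne_zero, false_or]
    rw [Point.some.injEq, self_eq_neg]
    refine ⟨fun hy => ⟨?_, hy⟩, And.right⟩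
    subst hy
    by_contra hx
    exact hsq (isSquare_of_root_ne_zero hx ((equation_zero_iff a b x).mp h.1))

lemma natCard_twoTorsion {a b : ℤ} (hb : b ≠ 0) (hsq : ¬ IsSquare (a ^ 2 - 4 * b)) :
    Nat.card {P : (Eab a b).Point // 2 • P = 0} = 2 := by
  change Set.ncard {P : (Eab a b).Point | 2 • P = 0} = 2
  rw [twoTorsion_eq_pair hb hsq, Set.ncard_pair (Point.some_ne_zero _).symm]

lemma isSquare_of_singular_or_natCard_ne_two {a b : ℤ}
    (h : b * (a ^ 2 - 4 * b) = 0 ∨ Nat.card {P : (Eab a b).Point // 2 • P = 0} ≠ 2) :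
    IsSquare (a ^ 2 - 4 * b) := by
  by_contra hsq
  have hb : b ≠ 0 := by
    rintro rfl
    exact hsq ⟨a, by ring⟩
  have hdiscr : a ^ 2 - 4 * b ≠ 0 := fun h0 => hsq (h0 ▸ IsSquare.zero)
  exact h.elim (mul_ne_zero hb hdiscr) (· (natCard_twoTorsion hb hsq))

end Eab

def squareDiscrPairs (X : ℝ) : Set (ℤ × ℤ) :=
  {q | (|q.1| : ℝ) ≤ X ∧ (|q.2| : ℝ) ≤ X ^ 2 ∧ IsSquare (q.1 ^ 2 - 4 * q.2)}

noncomputable def discrBox (N : ℕ) : Finset (ℤ × ℤ) :=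
  Finset.Icc (-N : ℤ) N ×ˢ Finset.Icc 0 (3 * N : ℤ)

lemma card_discrBox (N : ℕ) : (discrBox N).card = (2 * N + 1) * (3 * N + 1) := by
  simp only [discrBox, Finset.card_product, Int.card_Icc]
  congr 1
  omega

lemma squareDiscrPairs_subset_image_discrBox (X : ℝ) :
    squareDiscrPairs X ⊆
      (discrBox ⌈X⌉₊).image (fun p : ℤ × ℤ => (p.1, (p.1 ^ 2 - p.2 ^ 2) / 4)) := by
  rintro ⟨a, b⟩ ⟨ha, hb, r, hr⟩
  dsimp only at ha hb hr
  set N := ⌈X⌉₊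
  have hXN : X ≤ N := Nat.le_ceil X
  have haN : |a| ≤ N := by exact_mod_cast ha.trans hXN
  have hbN : |b| ≤ N ^ 2 := by
    have : X ^ 2 ≤ (N : ℝ) ^ 2 := by gcongr; linarith [abs_nonneg (a : ℝ)]
    exact_mod_cast hb.trans this
  rw [← sq] at hr
  have hrN : |r| ≤ 3 * N := by
    have : |a| ^ 2 ≤ (N : ℤ) ^ 2 := pow_le_pow_left₀ (abs_nonneg a) haN 2
    nlinarith [sq_abs a, sq_abs r, abs_le.mp hbN, abs_nonneg r]
  refine Finset.mem_image.mpr ⟨(a, |r|), ?_, ?_⟩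
  · simp only [discrBox, Finset.mem_product, Finset.mem_Icc]
    exact ⟨abs_le.mp haN, abs_nonneg r, hrN⟩
  · have : a ^ 2 - r ^ 2 = 4 * b := by omega
    simp [this]

lemma squareDiscrPairs_finite (X : ℝ) : (squareDiscrPairs X).Finite :=
  (Finset.finite_toSet _).subset (squareDiscrPairs_subset_image_discrBox X)

lemma ncard_squareDiscrPairs_le {X : ℝ} (hX : 1 ≤ X) :
    ((squareDiscrPairs X).ncard : ℝ) ≤ 35 * X ^ 2 := by
  set N := ⌈X⌉₊
  have hN : (N : ℝ) ≤ 2 * X := by linarith [Nat.ceil_lt_add_one (by linarith : 0 ≤ X)]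
  have hcard : (squareDiscrPairs X).ncard ≤ (2 * N + 1) * (3 * N + 1) := by
    rw [← card_discrBox]
    refine (Set.ncard_le_ncard (squareDiscrPairs_subset_image_discrBox X) (Finset.finite_toSet _)).trans ?_
    rw [Set.ncard_coe_finset]
    exact Finset.card_image_le
  calc ((squareDiscrPairs X).ncard : ℝ) ≤ (2 * N + 1) * (3 * N + 1) := by exact_mod_cast hcard
    _ ≤ 35 * X ^ 2 := by nlinarith [Nat.cast_nonneg (α := ℝ) N]

theorem two_torsion_usually_cyclic_of_order_two :
    ∃ C : ℝ, 0 < C ∧ ∀ X : ℝ, 1 ≤ X →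
      (Set.ncard {q : ℤ × ℤ | (|q.1| : ℝ) ≤ X ∧ (|q.2| : ℝ) ≤ X ^ 2 ∧
        (q.2 * (q.1 ^ 2 - 4 * q.2) = 0 ∨
          Nat.card {P : (Eab q.1 q.2).Point // 2 • P = 0} ≠ 2)} : ℝ) ≤ C * X ^ 2 := by
  refine ⟨35, by norm_num, fun X hX => le_trans ?_ (ncard_squareDiscrPairs_le hX)⟩
  exact Nat.cast_le.mpr <| Set.ncard_le_ncard
    (fun _ ⟨ha, hb, h⟩ => ⟨ha, hb, Eab.isSquare_of_singular_or_natCard_ne_two h⟩)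
    (squareDiscrPairs_finite X)
end

section
/- Let M ≥ 1 and let q₁ < q₂ < … < q_M be distinct odd primes. There exists a constant c > 0 (depending on q₁,…,q_M) such that for all sufficiently large X, the number of pairs (a,b) ∈ ℤ² with |a| ≤ X, |b| ≤ X², gcd(a,b) = 1, and ν_{q_i}(a²−4b) = 1 for every 1 ≤ i ≤ M, is at least c·X³. -/
/-!
Let `P` be the product of the `qᵢ` (odd and squarefree) and write `P = 2k + 1`. If `a ≡ 1` and
`b ≡ 2k²(k + 1)` modulo `P²`, then `4b ≡ 1 - P`, so `a² - 4b ≡ P (mod P²)` and every `qᵢ` divides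
`a² - 4b` exactly once. There are about `2X³/P⁴` such pairs with `0 < a ≤ X`, `|b| ≤ X²`. Those
with a common divisor `d ≥ 2` force `d` coprime to `P` (as `a ≡ 1`), and then both `a` and `b`
lie in single classes modulo `dP²`; there are at most `Σ_d (X/(dP²) + 1)(2X²/(dP²) + 1)` of them.
Since `Σ_{d ≥ 2} d⁻² ≤ 11/12 < 1` and `Σ_{d ≤ X} d⁻¹ ≤ 2√X`, at least `X³/(12P⁴)` coprime pairs
remain once `X ≥ (200P²)²`.
-/

open Finset

namespace Int

variable {lo hi m : ℤ}

lemma card_Ioc_filter_modEq_le (h : lo ≤ hi) (hm : 0 < m) (v : ℤ) :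
    (#{x ∈ Ioc lo hi | x ≡ v [ZMOD m]} : ℝ) ≤ (hi - lo) / m + 1 := by
  have hmono : ⌊(lo - v : ℚ) / m⌋ ≤ ⌊(hi - v : ℚ) / m⌋ :=
    floor_mono (div_le_div_of_nonneg_right (by simp [h]) (by positivity))
  have hcard : (#{x ∈ Ioc lo hi | x ≡ v [ZMOD m]} : ℤ) =
      ⌊(hi - v : ℚ) / m⌋ - ⌊(lo - v : ℚ) / m⌋ := by
    rw [Ioc_filter_modEq_card lo hi hm v, max_eq_left (sub_nonneg.2 hmono)]
  have key : (#{x ∈ Ioc lo hi | x ≡ v [ZMOD m]} : ℚ) ≤ (hi - lo) / m + 1 := by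
    rw [← cast_natCast, hcard, cast_sub]
    have h₁ := floor_le ((hi - v : ℚ) / m)
    have h₂ := lt_floor_add_one ((lo - v : ℚ) / m)
    have : ((hi - v : ℚ) / m) - (lo - v) / m = (hi - lo) / m := by ring
    linarith
  exact_mod_cast key

lemma sub_div_sub_one_le_card_Ioc_filter_modEq (hm : 0 < m) (v : ℤ) :
    (hi - lo) / m - 1 ≤ (#{x ∈ Ioc lo hi | x ≡ v [ZMOD m]} : ℝ) := by
  have hcard : ⌊(hi - v : ℚ) / m⌋ - ⌊(lo - v : ℚ) / m⌋ ≤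
      (#{x ∈ Ioc lo hi | x ≡ v [ZMOD m]} : ℤ) := by
    rw [Ioc_filter_modEq_card lo hi hm v]
    exact le_max_left _ _
  have key : (hi - lo) / m - 1 ≤ (#{x ∈ Ioc lo hi | x ≡ v [ZMOD m]} : ℚ) := by
    have hcard' : ((⌊(hi - v : ℚ) / m⌋ - ⌊(lo - v : ℚ) / m⌋ : ℤ) : ℚ) ≤ _ := cast_le.2 hcard
    have h₁ := lt_floor_add_one ((hi - v : ℚ) / m)
    have h₂ := floor_le ((lo - v : ℚ) / m)
    have : ((hi - v : ℚ) / m) - (lo - v) / m = (hi - lo) / m := by ring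
    push_cast at hcard'
    linarith
  exact_mod_cast key

lemma card_le_of_subset_Ioc_of_modEq {s : Finset ℤ} (hs : s ⊆ Ioc lo hi)
    (hmod : ∀ x ∈ s, ∀ y ∈ s, x ≡ y [ZMOD m]) (h : lo ≤ hi) (hm : 0 < m) :
    (#s : ℝ) ≤ (hi - lo) / m + 1 := by
  rcases s.eq_empty_or_nonempty with rfl | ⟨x₀, hx₀⟩
  · have : (0 : ℝ) ≤ (hi - lo) / m := div_nonneg (by simp [h]) (by positivity)
    simp only [card_empty, CharP.cast_eq_zero]
    linarith
  refine le_trans ?_ (card_Ioc_filter_modEq_le h hm x₀)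
  exact_mod_cast card_le_card fun x hx => mem_filter.2 ⟨hs hx, hmod x hx x₀ hx₀⟩

lemma card_filter_dvd_filter_modEq_le (h : lo ≤ hi) (hm : 0 < m) (v : ℤ) {d : ℤ} (hd : 0 < d)
    (hdm : IsCoprime d m) :
    (#{x ∈ {x ∈ Ioc lo hi | x ≡ v [ZMOD m]} | d ∣ x} : ℝ) ≤ (hi - lo) / m / d + 1 := by
  rw [div_div, mul_comm, ← cast_mul]
  refine card_le_of_subset_Ioc_of_modEq (fun x hx => (mem_filter.1 (mem_filter.1 hx).1).1) ?_ h
    (mul_pos hd hm)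
  intro x hx y hy
  simp only [mem_filter] at hx hy
  rw [modEq_iff_dvd]
  exact hdm.mul_dvd (dvd_sub hy.2 hx.2) (hx.1.2.trans hy.1.2.symm).dvd

lemma filter_dvd_filter_modEq_eq_empty (s : Finset ℤ) {v d : ℤ} (hv : IsCoprime v m)
    (hd : ¬ IsCoprime d m) : {x ∈ {x ∈ s | x ≡ v [ZMOD m]} | d ∣ x} = ∅ := by
  refine filter_eq_empty_iff.2 fun x hx hdx => hd ?_
  obtain ⟨k, hk⟩ := (mem_filter.1 hx).2.symm.dvd
  have hx : x = v + m * k := by linarith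
  exact (hx ▸ hv.add_mul_left_left k).of_isCoprime_of_dvd_left hdx

lemma card_filter_dvd_mul_card_filter_dvd_le {lo hi lo' hi' r v d : ℤ} (h : lo ≤ hi)
    (h' : lo' ≤ hi') (hm : 0 < m) (hr : IsCoprime r m) (hd : 0 < d) :
    (#{x ∈ {x ∈ Ioc lo hi | x ≡ r [ZMOD m]} | d ∣ x} *
      #{y ∈ {y ∈ Ioc lo' hi' | y ≡ v [ZMOD m]} | d ∣ y} : ℝ) ≤
      ((hi - lo) / m / d + 1) * ((hi' - lo') / m / d + 1) := by
  have hnonneg {a b : ℤ} (hab : a ≤ b) : (0 : ℝ) ≤ (b - a) / m / d + 1 := by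
    have : (0 : ℝ) ≤ b - a := by simp [hab]
    positivity
  by_cases hdm : IsCoprime d m
  · exact mul_le_mul (card_filter_dvd_filter_modEq_le h hm r hd hdm)
      (card_filter_dvd_filter_modEq_le h' hm v hd hdm) (by positivity) (hnonneg h)
  · rw [filter_dvd_filter_modEq_eq_empty _ hr hdm, card_empty, CharP.cast_eq_zero, zero_mul]
    exact mul_nonneg (hnonneg h) (hnonneg h')

lemma abs_le_of_mem_Ioc_floor {x : ℤ} {Y : ℝ} (hx : x ∈ Ioc (-(⌊Y⌋₊ : ℤ)) ⌊Y⌋₊) :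
    (|x| : ℝ) ≤ Y := by
  rw [mem_Ioc] at hx
  have hY : 0 ≤ Y := by
    by_contra! hY
    rw [Nat.floor_eq_zero.2 (hY.trans zero_lt_one)] at hx
    omega
  calc (|x| : ℝ) ≤ ⌊Y⌋₊ := by exact_mod_cast abs_le.2 ⟨hx.1.le, hx.2⟩
    _ ≤ Y := Nat.floor_le hY

end Int

lemma sum_Icc_two_inv_sq_le (n : ℕ) : ∑ d ∈ Icc 2 n, ((d : ℝ) ^ 2)⁻¹ ≤ 11 / 12 := by
  have hsub : Icc 2 n ⊆ insert 2 (Ioo 2 (n + 1)) := by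
    intro d hd
    simp only [mem_Icc, mem_insert, mem_Ioo] at hd ⊢
    omega
  calc ∑ d ∈ Icc 2 n, ((d : ℝ) ^ 2)⁻¹
      ≤ ∑ d ∈ insert 2 (Ioo 2 (n + 1)), ((d : ℝ) ^ 2)⁻¹ :=
        sum_le_sum_of_subset_of_nonneg hsub fun _ _ _ => by positivity
    _ = 1 / 4 + ∑ d ∈ Ioo 2 (n + 1), ((d : ℝ) ^ 2)⁻¹ := by
        rw [sum_insert (by simp)]; norm_num
    _ ≤ 1 / 4 + 2 / (2 + 1) := by grw [sum_Ioo_inv_sq_le]; norm_num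
    _ = 11 / 12 := by norm_num

lemma sum_Icc_two_inv_le (n : ℕ) : ∑ d ∈ Icc 2 n, (d : ℝ)⁻¹ ≤ 2 * √n := by
  rcases Nat.eq_zero_or_pos n with rfl | hn
  · simp
  have hharmonic : ∑ d ∈ Icc 2 n, (d : ℝ)⁻¹ = harmonic n - 1 := by
    rw [harmonic_eq_sum_Icc, ← sum_erase_add (Icc 1 n) _ (left_mem_Icc.2 hn), Icc_erase_left]
    push_cast
    simp [← Icc_add_one_left_eq_Ioc]
  have hlog : Real.log n ≤ 2 * (√n - 1) := by
    have := Real.log_le_sub_one_of_pos (Real.sqrt_pos.2 (by exact_mod_cast hn : (0 : ℝ) < n))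
    rw [Real.log_sqrt (Nat.cast_nonneg n)] at this
    linarith
  linarith [harmonic_le_one_add_log n]

lemma sum_Icc_two_div_add_one_mul_div_add_one_le (n : ℕ) {x y : ℝ} (hx : 0 ≤ x) (hy : 0 ≤ y) :
    ∑ d ∈ Icc 2 n, (x / d + 1) * (y / d + 1) ≤ 11 / 12 * (x * y) + (x + y) * (2 * √n) + n := by
  have hexpand : ∀ d ∈ Icc 2 n,
      (x / d + 1) * (y / d + 1) = x * y * ((d : ℝ) ^ 2)⁻¹ + (x + y) * (d : ℝ)⁻¹ + 1 := by
    intro d hd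
    have : (d : ℝ) ≠ 0 := by have := (mem_Icc.1 hd).1; positivity
    field_simp
    ring
  have hcard : (#(Icc 2 n) : ℝ) ≤ n := by simp
  rw [sum_congr rfl hexpand, sum_add_distrib, sum_add_distrib, ← mul_sum, ← mul_sum, sum_const,
    nsmul_one]
  have h₁ := mul_le_mul_of_nonneg_left (sum_Icc_two_inv_sq_le n) (mul_nonneg hx hy)
  have h₂ := mul_le_mul_of_nonneg_left (sum_Icc_two_inv_le n) (add_nonneg hx hy)
  linarith

lemma card_mul_card_le_card_filter_isCoprime_add (A B : Finset ℤ) (N : ℕ)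
    (hA : A ⊆ Ioc 0 (N : ℤ)) :
    #A * #B ≤ #{p ∈ A ×ˢ B | IsCoprime p.1 p.2} +
      ∑ d ∈ Icc 2 N, #{a ∈ A | (d : ℤ) ∣ a} * #{b ∈ B | (d : ℤ) ∣ b} := by
  have hbad : {p ∈ A ×ˢ B | ¬ IsCoprime p.1 p.2} ⊆
      (Icc 2 N).biUnion fun d => {a ∈ A | (d : ℤ) ∣ a} ×ˢ {b ∈ B | (d : ℤ) ∣ b} := by
    rintro ⟨a, b⟩ hab
    simp only [mem_filter, mem_product, Int.isCoprime_iff_gcd_eq_one] at hab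
    obtain ⟨⟨ha, hb⟩, hgcd⟩ := hab
    have ha_pos : 0 < a := (mem_Ioc.1 (hA ha)).1
    have hle : (a.gcd b : ℤ) ≤ N :=
      (Int.le_of_dvd ha_pos (Int.gcd_dvd_left a b)).trans (mem_Ioc.1 (hA ha)).2
    have hpos : 0 < a.gcd b := Int.gcd_pos_of_ne_zero_left b ha_pos.ne'
    simp only [mem_biUnion, mem_Icc, mem_product, mem_filter]
    exact ⟨a.gcd b, ⟨by omega, by omega⟩, ⟨ha, Int.gcd_dvd_left a b⟩, ⟨hb, Int.gcd_dvd_right a b⟩⟩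
  calc #A * #B = #{p ∈ A ×ˢ B | IsCoprime p.1 p.2} + #{p ∈ A ×ˢ B | ¬ IsCoprime p.1 p.2} := by
        rw [card_filter_add_card_filter_not, card_product]
    _ ≤ _ := by
        gcongr
        refine (card_le_card hbad).trans (card_biUnion_le.trans_eq ?_)
        simp only [card_product]

lemma sum_card_filter_dvd_mul_card_filter_dvd_le {Q r : ℤ} (hQ : 0 < Q) (hr : IsCoprime r Q)
    (v : ℤ) (N K : ℕ) :
    ∑ d ∈ Icc 2 N, (#{a ∈ {a ∈ Ioc 0 (N : ℤ) | a ≡ r [ZMOD Q]} | (d : ℤ) ∣ a} *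
      #{b ∈ {b ∈ Ioc (-(K : ℤ)) K | b ≡ v [ZMOD Q]} | (d : ℤ) ∣ b} : ℝ) ≤
      11 / 12 * (N / Q * (2 * K / Q)) + (N / Q + 2 * K / Q) * (2 * √N) + N := by
  refine le_trans (sum_le_sum fun d hd => ?_) (sum_Icc_two_div_add_one_mul_div_add_one_le N
    (x := N / Q) (y := 2 * K / Q) (by positivity) (by positivity))
  have hd : (0 : ℤ) < d := by have := (mem_Icc.1 hd).1; omega
  have := Int.card_filter_dvd_mul_card_filter_dvd_le (lo := 0) (hi := N) (lo' := -K) (hi' := K)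
    (v := v) (by positivity) (by omega) hQ hr hd
  push_cast at this
  rwa [sub_zero, sub_neg_eq_add, ← two_mul] at this

theorem le_card_filter_isCoprime_progressions {Q : ℤ} (hQ : 0 < Q) {r : ℤ} (hr : IsCoprime r Q)
    (v : ℤ) {X : ℝ} (hX : (200 * Q) ^ 2 ≤ X) :
    X ^ 3 / (12 * Q ^ 2) ≤
      #{p ∈ {a ∈ Ioc 0 (⌊X⌋₊ : ℤ) | a ≡ r [ZMOD Q]} ×ˢ
        {b ∈ Ioc (-(⌊X ^ 2⌋₊ : ℤ)) ⌊X ^ 2⌋₊ | b ≡ v [ZMOD Q]} | IsCoprime p.1 p.2} := by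
  set N := ⌊X⌋₊
  set K := ⌊X ^ 2⌋₊
  set A := {a ∈ Ioc 0 (N : ℤ) | a ≡ r [ZMOD Q]}
  set B := {b ∈ Ioc (-(K : ℤ)) K | b ≡ v [ZMOD Q]}
  have hQ₁ : (1 : ℝ) ≤ Q := by exact_mod_cast hQ
  have hQinv : 1 / (Q : ℝ) ≤ 1 := by rw [div_le_one (by linarith)]; exact hQ₁
  set s := √X
  have hs : 200 * Q ≤ s := Real.le_sqrt_of_sq_le hX
  have hX₁ : 1 ≤ X := by nlinarith
  have hsX : s ^ 2 = X := Real.sq_sqrt (by linarith)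
  have hN : X - 1 ≤ N ∧ (N : ℝ) ≤ X := ⟨(Nat.sub_one_lt_floor X).le, Nat.floor_le (by linarith)⟩
  have hK : X ^ 2 - 1 ≤ K ∧ (K : ℝ) ≤ X ^ 2 :=
    ⟨(Nat.sub_one_lt_floor _).le, Nat.floor_le (by positivity)⟩
  set u := X / Q with hu_def
  have hu : 200 * s ≤ u := by rw [le_div_iff₀ (by linarith), ← hsX]; nlinarith
  have hXu : 2 * X * u = 2 * X ^ 2 / Q := by rw [hu_def]; ring
  have hA : u - 2 ≤ #A := by
    have hcard := Int.sub_div_sub_one_le_card_Ioc_filter_modEq (lo := 0) (hi := N) hQ r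
    calc u - 2 ≤ (X - 1) / Q - 1 := by rw [sub_div]; linarith
      _ ≤ N / Q - 1 := by gcongr; exact hN.1
      _ ≤ #A := by simpa using hcard
  have hB : 2 * X * u - 3 ≤ #B := by
    have hcard := Int.sub_div_sub_one_le_card_Ioc_filter_modEq (lo := -K) (hi := K) hQ v
    calc 2 * X * u - 3 ≤ (2 * X ^ 2 - 2) / Q - 1 := by
          rw [hXu, sub_div]; linarith [show 2 / (Q : ℝ) = 2 * (1 / Q) by ring]
      _ ≤ (K - -K) / Q - 1 := by gcongr ?_ / _ - 1; linarith [hK.1]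
      _ ≤ #B := by simpa using hcard
  have hbad : ∑ d ∈ Icc 2 N, (#{a ∈ A | (d : ℤ) ∣ a} * #{b ∈ B | (d : ℤ) ∣ b} : ℝ) ≤
      11 / 12 * (u * (2 * X * u)) + (u + 2 * X * u) * (2 * s) + X := by
    refine (sum_card_filter_dvd_mul_card_filter_dvd_le hQ hr v N K).trans ?_
    rw [hu_def, hXu]
    gcongr
    exacts [hN.2, hK.2, hN.2, hK.2, Real.sqrt_le_sqrt hN.2, hN.2]
  have hcount : (#A * #B : ℝ) ≤ #{p ∈ A ×ˢ B | IsCoprime p.1 p.2} +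
      ∑ d ∈ Icc 2 N, (#{a ∈ A | (d : ℤ) ∣ a} * #{b ∈ B | (d : ℤ) ∣ b} : ℝ) := by
    exact_mod_cast card_mul_card_le_card_filter_isCoprime_add A B N (filter_subset _ _)
  have hmain : (u - 2) * (2 * X * u - 3) ≤ (#A * #B : ℝ) :=
    mul_le_mul hA hB (by nlinarith) (by linarith)
  -- The main term is `X u² / 6`; each error term is `O(X u s)`, and `u ≥ 200 s`.
  rw [show X ^ 3 / (12 * Q ^ 2) = X * u ^ 2 / 12 by ring]
  nlinarith [mul_nonneg (mul_nonneg (by linarith : (0 : ℝ) ≤ X) (by linarith : (0 : ℝ) ≤ u))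
    (by linarith : (0 : ℝ) ≤ u - 200 * s)]

lemma finite_setOf_abs_le (X Y : ℝ) :
    {ab : ℤ × ℤ | (|ab.1| : ℝ) ≤ X ∧ (|ab.2| : ℝ) ≤ Y}.Finite := by
  refine ((Set.finite_Icc (-⌊X⌋) ⌊X⌋).prod (Set.finite_Icc (-⌊Y⌋) ⌊Y⌋)).subset ?_
  rintro ⟨a, b⟩ ⟨ha, hb⟩
  rw [← Int.cast_abs, ← Int.le_floor, abs_le] at ha hb
  exact ⟨ha, hb⟩

lemma squarefree_prod_natCast_of_prime {S : Finset ℕ} (hS : ∀ p ∈ S, p.Prime) :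
    Squarefree (∏ p ∈ S, (p : ℤ)) :=
  squarefree_prod_of_pairwise_isCoprime
    (fun p hp p' hp' hne => Int.isCoprime_iff_gcd_eq_one.2 (by
      simpa [Int.gcd_natCast_natCast] using (Nat.coprime_primes (hS p hp) (hS p' hp')).2 hne)
      |>.isRelPrime)
    fun p hp => (Nat.prime_iff_prime_int.1 (hS p hp)).squarefree

lemma sq_sub_four_mul_modEq {P k a b : ℤ} (hP : P = 2 * k + 1) (ha : a ≡ 1 [ZMOD P ^ 2])
    (hb : b ≡ 2 * k ^ 2 * (k + 1) [ZMOD P ^ 2]) : a ^ 2 - 4 * b ≡ P [ZMOD P ^ 2] := by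
  subst hP
  calc a ^ 2 - 4 * b ≡ 1 ^ 2 - 4 * (2 * k ^ 2 * (k + 1)) [ZMOD (2 * k + 1) ^ 2] :=
        (ha.pow 2).sub (hb.mul_left 4)
    _ ≡ 2 * k + 1 [ZMOD (2 * k + 1) ^ 2] := Int.modEq_iff_dvd.2 ⟨2 * k, by ring⟩

lemma padicValInt_eq_one_of_modEq_sq {p : ℕ} [hp : Fact p.Prime] {P z : ℤ} (hpP : (p : ℤ) ∣ P)
    (hP : Squarefree P) (hz : z ≡ P [ZMOD P ^ 2]) :
    padicValInt p z = 1 ∧ (p : ℤ) ∣ z := by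
  have hpP₂ : ¬ (p : ℤ) ^ 2 ∣ P := fun h =>
    (Nat.prime_iff_prime_int.1 hp.out).not_isUnit (hP _ (sq (p : ℤ) ▸ h))
  have hsub : (p : ℤ) ^ 2 ∣ z - P := (pow_dvd_pow_of_dvd hpP 2).trans hz.symm.dvd
  have hdvd : (p : ℤ) ∣ z := by
    simpa using dvd_add ((dvd_pow_self _ two_ne_zero).trans hsub) hpP
  have hndvd : ¬ (p : ℤ) ^ 2 ∣ z := fun h => hpP₂ (by simpa using dvd_sub h hsub)
  have hz₀ : z ≠ 0 := by rintro rfl; exact hndvd (dvd_zero _)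
  have h₁ := (padicValInt_dvd_iff 1 z).1 (by simpa using hdvd)
  have h₂ := mt (padicValInt_dvd_iff 2 z).2 hndvd
  simp only [hz₀, false_or, not_le] at h₁ h₂
  exact ⟨by omega, hdvd⟩

theorem positive_proportion_exact_valuation_general (M : ℕ) (q : Fin M → ℕ)
    (hq : ∀ i, (q i).Prime) (hodd : ∀ i, q i ≠ 2) :
    ∃ c : ℝ, 0 < c ∧ ∃ X₀ : ℝ, ∀ X : ℝ, X₀ ≤ X →
      c * X ^ 3 ≤
        (Set.ncard {ab : ℤ × ℤ | (|ab.1| : ℝ) ≤ X ∧ (|ab.2| : ℝ) ≤ X ^ 2 ∧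
          IsCoprime ab.1 ab.2 ∧
          ∀ i : Fin M, padicValInt (q i) (ab.1 ^ 2 - 4 * ab.2) = 1 ∧
            (q i : ℤ) ∣ ab.1 ^ 2 - 4 * ab.2} : ℝ) := by
  set P := ∏ p ∈ univ.image q, (p : ℤ)
  have hsqf : Squarefree P := squarefree_prod_natCast_of_prime (by simpa using hq)
  obtain ⟨k, hk⟩ : Odd P := prod_induction _ Odd (fun _ _ => Odd.mul) odd_one (by
    simpa using fun i => (hq i).odd_of_ne_two (hodd i))
  have hP : P ≠ 0 := by omega
  refine ⟨1 / (12 * (P : ℝ) ^ 4), by positivity, (200 * (P : ℝ) ^ 2) ^ 2, fun X hX => ?_⟩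
  calc 1 / (12 * (P : ℝ) ^ 4) * X ^ 3 = X ^ 3 / (12 * ((P ^ 2 : ℤ) : ℝ) ^ 2) := by
        push_cast; ring
    _ ≤ _ := le_card_filter_isCoprime_progressions (by positivity) isCoprime_one_left
        (2 * k ^ 2 * (k + 1)) (by push_cast; exact hX)
    _ ≤ _ := by
      rw [← Set.ncard_coe_finset]
      refine Nat.cast_le.2 (Set.ncard_le_ncard ?_ ((finite_setOf_abs_le X (X ^ 2)).subset
        fun _ h => ⟨h.1, h.2.1⟩))
      rintro ⟨a, b⟩ hab
      simp only [coe_filter, mem_product, mem_filter] at hab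
      obtain ⟨⟨⟨ha, ha₁⟩, ⟨hb, hb₁⟩⟩, hcop⟩ := hab
      refine ⟨Int.abs_le_of_mem_Ioc_floor (Ioc_subset_Ioc_left (by omega) ha),
        Int.abs_le_of_mem_Ioc_floor hb, hcop, fun i => ?_⟩
      have := Fact.mk (hq i)
      exact padicValInt_eq_one_of_modEq_sq
        (dvd_prod_of_mem (fun p : ℕ => (p : ℤ)) (mem_image_of_mem q (mem_univ i))) hsqf
        (sq_sub_four_mul_modEq hk ha₁ hb₁)

theorem positive_proportion_exact_valuation (M : ℕ) (hM : 1 ≤ M) (q : Fin M → ℕ)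
    (hq : ∀ i, (q i).Prime) (hodd : ∀ i, q i ≠ 2) (hmono : StrictMono q) :
    ∃ c : ℝ, 0 < c ∧ ∃ X₀ : ℝ, ∀ X : ℝ, X₀ ≤ X →
      c * X ^ 3 ≤
        (Set.ncard {ab : ℤ × ℤ | (|ab.1| : ℝ) ≤ X ∧ (|ab.2| : ℝ) ≤ X ^ 2 ∧
          IsCoprime ab.1 ab.2 ∧
          ∀ i : Fin M, padicValInt (q i) (ab.1 ^ 2 - 4 * ab.2) = 1 ∧
            (q i : ℤ) ∣ ab.1 ^ 2 - 4 * ab.2} : ℝ) :=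
  positive_proportion_exact_valuation_general M q hq hodd
end

section
/- Let α₊ be the unique real root of x³ + x − 1 and α₋ the unique real root of x³ − x − 1. Then, as X → ∞, #{(a,b) ∈ ℤ² : |a| < X² and |b³ + ab| < X³} = (2·log(α₋/α₊) + (4/3)·(α₊ + α₋))·X³ + o(X³). -/
/-!
For fixed `a` with `|a| < X ^ 2`, the map `b ↦ b ^ 3 + a * b` meets each of the levels `± X ^ 3`
only once, so the admissible `b` are those with `|b| < X * r (a / X ^ 2)`, where `r t` is the
positive root of `x ^ 3 + t * x = 1`. Counting the `b` in each fibre and summing over `a` is a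
Riemann sum of the antitone function `r`, so the count is `2 X ^ 3 ∫_{-1}^{1} r + O(X ^ 2)`.
The function `r` inverts `x ↦ x⁻¹ - x ^ 2`, which sends `α₋, α₊` to `-1, 1`; substituting
`t = x⁻¹ - x ^ 2` gives `∫_{-1}^{1} r = ∫_{α₋}^{α₊} -(x⁻¹ + 2 x ^ 2) dx`, and
`α₊ ^ 3 = 1 - α₊`, `α₋ ^ 3 = 1 + α₋` turn this into `log (α₋ / α₊) + (2 / 3) (α₊ + α₋)`.
-/

open Filter Set intervalIntegral Topology
open scoped Finset

lemma cube_add_mul_lt_iff {a b ρ : ℝ} (h : 0 < 3 * ρ ^ 2 + 4 * a) :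
    b ^ 3 + a * b < ρ ^ 3 + a * ρ ↔ b < ρ := by
  have hq : 0 < (b + ρ / 2) ^ 2 + (3 * ρ ^ 2 + 4 * a) / 4 := by positivity
  have hfactor : b ^ 3 + a * b - (ρ ^ 3 + a * ρ)
      = (b - ρ) * ((b + ρ / 2) ^ 2 + (3 * ρ ^ 2 + 4 * a) / 4) := by ring
  constructor
  · intro hlt
    by_contra! hge
    nlinarith [mul_nonneg (sub_nonneg.2 hge) hq.le]
  · intro hlt
    nlinarith [mul_pos (sub_pos.2 hlt) hq]

lemma abs_cube_add_mul_lt_iff {a b ρ : ℝ} (h : 0 < 3 * ρ ^ 2 + 4 * a) :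
    |b ^ 3 + a * b| < ρ ^ 3 + a * ρ ↔ |b| < ρ := by
  have hneg : -(b ^ 3 + a * b) = (-b) ^ 3 + a * (-b) := by ring
  rw [abs_lt, abs_lt, neg_lt, hneg, cube_add_mul_lt_iff h, cube_add_mul_lt_iff h, neg_lt]

lemma exists_pos_cube_add_mul_eq_one (t : ℝ) : ∃ x : ℝ, 0 < x ∧ x ^ 3 + t * x = 1 := by
  have hcont : ContinuousOn (fun x : ℝ => x ^ 3 + t * x) (Icc 0 (1 + |t|)) := by fun_prop
  have hmem : (1 : ℝ) ∈ Icc (0 ^ 3 + t * 0) ((1 + |t|) ^ 3 + t * (1 + |t|)) := by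
    constructor
    · norm_num
    · have hu := abs_nonneg t
      nlinarith [mul_nonneg (by linarith : 0 ≤ 1 + |t|) (by linarith [neg_abs_le t] : 0 ≤ t + |t|),
        pow_nonneg hu 3, sq_nonneg |t|]
  obtain ⟨x, hx, hx1⟩ := intermediate_value_Icc (by positivity) hcont hmem
  refine ⟨x, hx.1.lt_of_ne ?_, hx1⟩
  rintro rfl
  norm_num at hx1

lemma strictAntiOn_inv_sub_sq : StrictAntiOn (fun x : ℝ => x⁻¹ - x ^ 2) (Ioi 0) := by
  intro x hx y _ hxy
  have : y⁻¹ < x⁻¹ := inv_strictAnti₀ hx hxy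
  have : x ^ 2 < y ^ 2 := by gcongr; exact le_of_lt hx
  simp only
  linarith

lemma cube_add_mul_eq_one_iff {t x : ℝ} (hx : 0 < x) : x ^ 3 + t * x = 1 ↔ x⁻¹ - x ^ 2 = t := by
  field_simp
  constructor <;> intro h <;> linarith

noncomputable def cubicRoot (t : ℝ) : ℝ := (exists_pos_cube_add_mul_eq_one t).choose

lemma cubicRoot_pos (t : ℝ) : 0 < cubicRoot t := (exists_pos_cube_add_mul_eq_one t).choose_spec.1

lemma cubicRoot_cube_add_mul (t : ℝ) : cubicRoot t ^ 3 + t * cubicRoot t = 1 :=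
  (exists_pos_cube_add_mul_eq_one t).choose_spec.2

lemma inv_sub_sq_cubicRoot (t : ℝ) : (cubicRoot t)⁻¹ - cubicRoot t ^ 2 = t :=
  (cube_add_mul_eq_one_iff (cubicRoot_pos t)).1 (cubicRoot_cube_add_mul t)

lemma cubicRoot_inv_sub_sq {x : ℝ} (hx : 0 < x) : cubicRoot (x⁻¹ - x ^ 2) = x :=
  strictAntiOn_inv_sub_sq.injOn (cubicRoot_pos _) hx (inv_sub_sq_cubicRoot _)

lemma cubicRoot_antitone : Antitone cubicRoot := by
  intro s t hst
  rw [← strictAntiOn_inv_sub_sq.le_iff_ge (cubicRoot_pos s) (cubicRoot_pos t),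
    inv_sub_sq_cubicRoot, inv_sub_sq_cubicRoot]
  exact hst

lemma continuous_cubicRoot : Continuous cubicRoot := by
  have hmono : Monotone fun t => cubicRoot (-t) := fun _ _ h => cubicRoot_antitone (neg_le_neg h)
  have hrange : range (fun t => cubicRoot (-t)) = Ioi 0 := by
    refine (range_subset_iff.2 fun t => cubicRoot_pos _).antisymm fun x hx => ?_
    exact ⟨-(x⁻¹ - x ^ 2), by simp only [neg_neg]; exact cubicRoot_inv_sub_sq hx⟩
  have : Continuous fun t => cubicRoot (-t) := continuous_iff_continuousAt.2 fun t =>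
    continuousAt_of_monotoneOn_of_image_mem_nhds (hmono.monotoneOn univ) univ_mem
      (by rw [image_univ, hrange]; exact Ioi_mem_nhds (cubicRoot_pos _))
  simpa [Function.comp_def] using this.comp continuous_neg

lemma three_mul_cubicRoot_sq_add_four_mul_pos {t : ℝ} (ht : -1 < t) :
    0 < 3 * cubicRoot t ^ 2 + 4 * t := by
  have hx := cubicRoot_pos t
  have hx1 := cubicRoot_cube_add_mul t
  -- for `x = cubicRoot t` the claim is `x ^ 3 < 4`, and `x ^ 3 = 1 - t * x < 1 + x` forces `x < 2`
  have hx2 : cubicRoot t < 2 := by nlinarith [sq_nonneg (cubicRoot t)]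
  nlinarith [mul_pos hx hx]

lemma abs_cube_add_mul_lt_cube_iff {X : ℝ} (hX : 0 < X) {a : ℝ} (ha : -X ^ 2 < a) (b : ℝ) :
    |b ^ 3 + a * b| < X ^ 3 ↔ |b| < X * cubicRoot (a / X ^ 2) := by
  have hX2 : 0 < X ^ 2 := by positivity
  set t := a / X ^ 2
  have hat : a = X ^ 2 * t := by simp only [t]; field_simp
  have hcube : X ^ 3 = (X * cubicRoot t) ^ 3 + a * (X * cubicRoot t) := by
    rw [hat]; linear_combination (-X ^ 3) * cubicRoot_cube_add_mul t
  have ht : -1 < t := by rw [lt_div_iff₀ hX2]; linarith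
  have hpos : 0 < 3 * (X * cubicRoot t) ^ 2 + 4 * a := by
    have := mul_pos hX2 (three_mul_cubicRoot_sq_add_four_mul_pos ht)
    rw [hat]; linarith
  rw [hcube, abs_cube_add_mul_lt_iff hpos]

lemma integral_cubicRoot {αp αm : ℝ} (hp : αp ^ 3 + αp - 1 = 0) (hm : αm ^ 3 - αm - 1 = 0) :
    ∫ t in (-1 : ℝ)..1, cubicRoot t = Real.log (αm / αp) + 2 / 3 * (αp + αm) := by
  have hαp : 0 < αp := by nlinarith [sq_nonneg αp]
  have hαm : 0 < αm := by
    by_contra! h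
    nlinarith [mul_nonneg (neg_nonneg.2 h) (sq_nonneg (αm + 1)), sq_nonneg (αm + 1), sq_nonneg αm]
  have hpos : ∀ x ∈ uIcc αm αp, 0 < x := fun x hx => (lt_min hαm hαp).trans_le hx.1
  have hφp : αp⁻¹ - αp ^ 2 = 1 := (cube_add_mul_eq_one_iff hαp).1 (by linarith)
  have hφm : αm⁻¹ - αm ^ 2 = -1 := (cube_add_mul_eq_one_iff hαm).1 (by linarith)
  have hsubst := integral_comp_mul_deriv (f := fun x : ℝ => x⁻¹ - x ^ 2)
    (f' := fun x => -(x ^ 2)⁻¹ - 2 * x) (g := cubicRoot)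
    (fun x hx => by
      simpa using (hasDerivAt_inv (hpos x hx).ne').fun_sub (hasDerivAt_pow 2 x))
    (by
      refine ContinuousOn.sub (ContinuousOn.neg (ContinuousOn.inv₀ (by fun_prop) ?_)) (by fun_prop)
      exact fun x hx => (pow_pos (hpos x hx) 2).ne')
    continuous_cubicRoot
  simp only [hφp, hφm] at hsubst
  rw [← hsubst]
  calc ∫ x in αm..αp, (cubicRoot ∘ fun x => x⁻¹ - x ^ 2) x * (-(x ^ 2)⁻¹ - 2 * x)
      = ∫ x in αm..αp, (-x⁻¹ - 2 * x ^ 2) := by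
        refine integral_congr fun x hx => ?_
        have hx := hpos x hx
        simp only [Function.comp_apply, cubicRoot_inv_sub_sq hx]
        field_simp
    _ = Real.log (αm / αp) + 2 / 3 * (αp + αm) := by
        have h0 : (0 : ℝ) ∉ uIcc αm αp := fun h => (hpos 0 h).false
        have hinv : IntervalIntegrable (fun x : ℝ => -x⁻¹) MeasureTheory.volume αm αp :=
          (intervalIntegrable_inv (fun x hx => (hpos x hx).ne') continuousOn_id).neg
        rw [integral_sub (f := fun x => -x⁻¹) (g := fun x => 2 * x ^ 2) hinv
            (by apply Continuous.intervalIntegrable; fun_prop),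
          integral_neg, integral_inv h0, integral_const_mul, integral_pow,
          Real.log_div hαp.ne' hαm.ne', Real.log_div hαm.ne' hαp.ne']
        linear_combination (-2 / 3 : ℝ) * hp + (2 / 3 : ℝ) * hm

lemma abs_intCast_lt_iff_mem_Ioo {b : ℤ} {h : ℝ} :
    |(b : ℝ)| < h ↔ b ∈ Finset.Ioo (-⌈h⌉) ⌈h⌉ := by
  rw [Finset.mem_Ioo, ← abs_lt, ← Int.cast_abs, Int.lt_ceil]

lemma card_Ioo_neg_ceil_ceil {h : ℝ} (hh : 0 < h) :
    (#(Finset.Ioo (-⌈h⌉) ⌈h⌉) : ℝ) = 2 * ⌈h⌉ - 1 := by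
  have := Int.ceil_pos.2 hh
  rw [Int.card_Ioo, ← Int.cast_natCast, Int.toNat_of_nonneg (by omega)]
  push_cast
  ring

lemma abs_card_Ioo_neg_ceil_ceil_sub_le {h : ℝ} (hh : 0 < h) :
    |(#(Finset.Ioo (-⌈h⌉) ⌈h⌉) : ℝ) - 2 * h| ≤ 1 := by
  rw [card_Ioo_neg_ceil_ceil hh, abs_le]
  constructor <;> linarith [Int.le_ceil h, Int.ceil_lt_add_one h]

lemma Set.ncard_setOf_fst_mem_snd_mem {α β : Type*} (s : Finset α) (t : α → Finset β) :
    {q : α × β | q.1 ∈ s ∧ q.2 ∈ t q.1}.ncard = ∑ a ∈ s, #(t a) := by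
  have : {q : α × β | q.1 ∈ s ∧ q.2 ∈ t q.1} =
      ↑((s.sigma t).map (Equiv.sigmaEquivProd α β).toEmbedding) := by
    ext ⟨a, b⟩
    simp
  rw [this, Set.ncard_coe_finset, Finset.card_map, Finset.card_sigma]

lemma Antitone.integral_le_sum_Ioo {f : ℝ → ℝ} (hf : Antitone f) {m n : ℤ} (hmn : m < n) :
    ∫ x in (m + 1 : ℝ)..n, f x ≤ ∑ a ∈ Finset.Ioo m n, f a := by
  have hlen : ((n - m - 1).toNat : ℝ) = n - m - 1 := by
    rw [← Int.cast_natCast, Int.toNat_of_nonneg (by omega)]; push_cast; ring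
  have := (hf.antitoneOn (Icc _ _)).integral_le_sum (x₀ := m + 1) (a := (n - m - 1).toNat)
  rw [Int.Ioo_eq_finset_map, Finset.sum_map]
  convert this using 2
  · rw [hlen]; ring
  · simp [add_comm]

lemma Antitone.sum_Ioo_le_integral {f : ℝ → ℝ} (hf : Antitone f) {m n : ℤ} (hmn : m < n) :
    ∑ a ∈ Finset.Ioo m n, f a ≤ ∫ x in (m : ℝ)..(n - 1), f x := by
  have hlen : ((n - m - 1).toNat : ℝ) = n - m - 1 := by
    rw [← Int.cast_natCast, Int.toNat_of_nonneg (by omega)]; push_cast; ring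
  have := (hf.antitoneOn (Icc _ _)).sum_le_integral (x₀ := m) (a := (n - m - 1).toNat)
  rw [Int.Ioo_eq_finset_map, Finset.sum_map]
  convert this using 2
  · simp only [Function.Embedding.trans_apply, Nat.castEmbedding_apply, addLeftEmbedding_apply]
    push_cast
    ring_nf
  · rw [hlen]; ring

lemma Antitone.abs_sum_Ioo_ceil_sub_integral_le {f : ℝ → ℝ} (hf : Antitone f)
    (hf0 : ∀ x, 0 ≤ f x) {H : ℝ} (hH : 0 < H) :
    |∑ a ∈ Finset.Ioo (-⌈H⌉) ⌈H⌉, f a - ∫ x in -H..H, f x| ≤ f (-H - 1) := by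
  set A := ⌈H⌉
  have hHA : H ≤ A := Int.le_ceil H
  have hAH : (A : ℝ) < H + 1 := Int.ceil_lt_add_one H
  have hA : 0 < A := Int.ceil_pos.2 hH
  have hint (u v : ℝ) : IntervalIntegrable f MeasureTheory.volume u v := hf.intervalIntegrable
  have hnonneg {u v : ℝ} (huv : u ≤ v) : 0 ≤ ∫ x in u..v, f x :=
    integral_nonneg huv fun x _ => hf0 x
  have hshort {u v : ℝ} (hu : -H - 1 ≤ u) (huv : u ≤ v) (hvu : v ≤ u + 1) :
      ∫ x in u..v, f x ≤ f (-H - 1) := by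
    have hbound := norm_integral_le_of_norm_le_const (a := u) (b := v) (C := f (-H - 1))
      (f := f) fun x hx => by
        rw [uIoc_of_le huv] at hx
        rw [Real.norm_eq_abs, abs_of_nonneg (hf0 x)]
        exact hf (by linarith [hx.1])
    rw [Real.norm_eq_abs, abs_of_nonneg (sub_nonneg.2 huv)] at hbound
    nlinarith [le_abs_self (∫ x in u..v, f x), hf0 (-H - 1)]
  have hlow := hf.integral_le_sum_Ioo (m := -A) (n := A) (by omega)
  have hup := hf.sum_Ioo_le_integral (m := -A) (n := A) (by omega)
  push_cast at hlow hup
  have h₁ := integral_add_adjacent_intervals (hint (-H) (-A + 1)) (hint (-A + 1) A)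
  have h₂ := integral_add_adjacent_intervals (hint (-H) H) (hint H A)
  have h₃ := integral_add_adjacent_intervals (hint (-A) (-H)) (hint (-H) (A - 1))
  have h₄ := integral_add_adjacent_intervals (hint (-H) (A - 1)) (hint (A - 1) H)
  have e₁ := hshort (u := -H) (v := -A + 1) (by linarith) (by linarith) (by linarith)
  have e₂ := hshort (u := -A) (v := -H) (by linarith) (by linarith) (by linarith)
  have hmono : f (-H) ≤ f (-H - 1) := hf (by linarith)
  rw [abs_le]
  constructor
  · linarith [hnonneg hHA]
  · linarith [hnonneg (by linarith : (A : ℝ) - 1 ≤ H)]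

lemma tendsto_div_pow_three_of_abs_sub_le {u : ℝ → ℝ} {c C : ℝ}
    (h : ∀ᶠ X in atTop, |u X - c * X ^ 3| ≤ C * X ^ 2) :
    Tendsto (fun X => u X / X ^ 3) atTop (𝓝 c) := by
  rw [tendsto_iff_norm_sub_tendsto_zero]
  refine squeeze_zero' (Eventually.of_forall fun _ => norm_nonneg _) ?_
    ((tendsto_const_nhds (x := C)).div_atTop tendsto_id)
  filter_upwards [h, eventually_gt_atTop 0] with X hX hX0
  have hX3 : 0 < X ^ 3 := by positivity
  rw [Real.norm_eq_abs, show u X / X ^ 3 - c = (u X - c * X ^ 3) / X ^ 3 by field_simp,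
    abs_div, abs_of_pos hX3, div_le_iff₀ hX3]
  calc |u X - c * X ^ 3| ≤ C * X ^ 2 := hX
    _ = C / id X * X ^ 3 := by rw [id]; field_simp

def twoTorsionRegion (X : ℝ) : Set (ℤ × ℤ) :=
  {q | (|q.1| : ℝ) < X ^ 2 ∧ (|q.2 ^ 3 + q.1 * q.2| : ℝ) < X ^ 3}

lemma twoTorsionRegion_eq {X : ℝ} (hX : 0 < X) :
    twoTorsionRegion X = {q | q.1 ∈ Finset.Ioo (-⌈X ^ 2⌉) ⌈X ^ 2⌉ ∧
      q.2 ∈ Finset.Ioo (-⌈X * cubicRoot (q.1 / X ^ 2)⌉) ⌈X * cubicRoot (q.1 / X ^ 2)⌉} := by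
  ext ⟨a, b⟩
  simp only [twoTorsionRegion, mem_ofPred_eq, ← abs_intCast_lt_iff_mem_Ioo]
  refine and_congr_right fun ha => abs_cube_add_mul_lt_cube_iff hX ?_ _
  linarith [neg_abs_le (a : ℝ)]

lemma abs_ncard_twoTorsionRegion_sub_le {X : ℝ} (hX : 1 ≤ X) :
    |((twoTorsionRegion X).ncard : ℝ) - 2 * (∫ t in (-1 : ℝ)..1, cubicRoot t) * X ^ 3|
      ≤ (3 + 2 * cubicRoot (-2)) * X ^ 2 := by
  have hX0 : 0 < X := by linarith
  have hX2 : 0 < X ^ 2 := by positivity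
  set s := Finset.Ioo (-⌈X ^ 2⌉) ⌈X ^ 2⌉
  set f : ℝ → ℝ := fun u => cubicRoot (u / X ^ 2)
  have hcount : ((twoTorsionRegion X).ncard : ℝ)
      = ∑ a ∈ s, (#(Finset.Ioo (-⌈X * f a⌉) ⌈X * f a⌉) : ℝ) := by
    rw [twoTorsionRegion_eq hX0, Set.ncard_setOf_fst_mem_snd_mem s
      (fun a => Finset.Ioo (-⌈X * f a⌉) ⌈X * f a⌉), Nat.cast_sum]
  have hfibres : |((twoTorsionRegion X).ncard : ℝ) - 2 * X * ∑ a ∈ s, f a| ≤ 2 * X ^ 2 + 1 := by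
    calc _ = |∑ a ∈ s, ((#(Finset.Ioo (-⌈X * f a⌉) ⌈X * f a⌉) : ℝ) - 2 * (X * f a))| := by
          rw [hcount, Finset.sum_sub_distrib, Finset.mul_sum]; simp only [mul_assoc]
      _ ≤ ∑ a ∈ s, (1 : ℝ) := Finset.abs_sum_le_sum_abs _ _ |>.trans <| Finset.sum_le_sum
          fun a _ => abs_card_Ioo_neg_ceil_ceil_sub_le (mul_pos hX0 (cubicRoot_pos _))
      _ ≤ 2 * X ^ 2 + 1 := by
          rw [Finset.sum_const, nsmul_one, card_Ioo_neg_ceil_ceil hX2]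
          linarith [Int.ceil_lt_add_one (X ^ 2)]
  have hriemann : |∑ a ∈ s, f a - X ^ 2 * ∫ t in (-1 : ℝ)..1, cubicRoot t| ≤ cubicRoot (-2) := by
    have hint : ∫ u in -X ^ 2..X ^ 2, f u = X ^ 2 * ∫ t in (-1 : ℝ)..1, cubicRoot t := by
      rw [integral_comp_div _ hX2.ne', neg_div, div_self hX2.ne', smul_eq_mul]
    have hend : f (-X ^ 2 - 1) ≤ cubicRoot (-2) := cubicRoot_antitone <| by
      rw [le_div_iff₀ hX2]; nlinarith
    rw [← hint]
    have hf : Antitone f := fun u v huv => cubicRoot_antitone (by gcongr)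
    exact (hf.abs_sum_Ioo_ceil_sub_integral_le (fun u => (cubicRoot_pos _).le) hX2).trans hend
  have hr := cubicRoot_pos (-2)
  calc _ = |(((twoTorsionRegion X).ncard : ℝ) - 2 * X * ∑ a ∈ s, f a)
        + 2 * X * (∑ a ∈ s, f a - X ^ 2 * ∫ t in (-1 : ℝ)..1, cubicRoot t)| := by ring_nf
    _ ≤ (2 * X ^ 2 + 1) + 2 * X * cubicRoot (-2) := by
        refine (abs_add_le _ _).trans (add_le_add hfibres ?_)
        rw [abs_mul, abs_of_pos (by positivity)]
        gcongr
    _ ≤ (3 + 2 * cubicRoot (-2)) * X ^ 2 := by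
        nlinarith [mul_le_mul_of_nonneg_left (show X ≤ X ^ 2 by nlinarith) hr.le]

theorem count_two_torsion_region (αp αm : ℝ) (hp : αp ^ 3 + αp - 1 = 0)
    (hm : αm ^ 3 - αm - 1 = 0) :
    Tendsto (fun X : ℝ =>
        (Set.ncard {q : ℤ × ℤ | (|q.1| : ℝ) < X ^ 2 ∧
          (|q.2 ^ 3 + q.1 * q.2| : ℝ) < X ^ 3} : ℝ) / X ^ 3)
      atTop (nhds (2 * Real.log (αm / αp) + (4 / 3) * (αp + αm))) := by
  have hlimit : 2 * Real.log (αm / αp) + (4 / 3) * (αp + αm)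
      = 2 * ∫ t in (-1 : ℝ)..1, cubicRoot t := by
    rw [integral_cubicRoot hp hm]; ring
  rw [hlimit]
  exact tendsto_div_pow_three_of_abs_sub_le
    ((eventually_ge_atTop 1).mono fun X hX => abs_ncard_twoTorsionRegion_sub_le hX)
end
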